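/- Let G be an undirected graph on N vertices with Laplacian L and neighbor sets 𝒩_i. For vectors x̂, e ∈ ℝ^N with x = x̂ - e, the quantity V̇ = -xᵀLx̂ satisfies V̇ ≤ Σ_{i=1}^N ( e_i² |𝒩_i| - Σ_{j∈𝒩_i} ¼ (x̂_i - x̂_j)² ). -/

import Mathlib

open Matrix Finset

namespace SimpleGraph

variable {V R : Type*} [Fintype V] [DecidableEq V] (G : SimpleGraph V) [DecidableRel G.Adj]

theorem lapMatrix_mulVec_apply_eq_sum_sub [NonAssocRing R] (x : V → R) (v : V) :
    (G.lapMatrix R *ᵥ x) v = ∑ u ∈ G.neighborFinset v, (x v - x u) := by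
  rw [lapMatrix_mulVec_apply, sum_sub_distrib, sum_const, card_neighborFinset_eq_degree,
    nsmul_eq_mul]

theorem dotProduct_lapMatrix_mulVec [NonAssocRing R] (y x : V → R) :
    y ⬝ᵥ (G.lapMatrix R *ᵥ x) = ∑ i, ∑ j ∈ G.neighborFinset i, y i * (x i - x j) := by
  simp only [dotProduct, lapMatrix_mulVec_apply_eq_sum_sub, mul_sum]

theorem dotProduct_lapMatrix_mulVec_self [Field R] [CharZero R] (x : V → R) :
    x ⬝ᵥ (G.lapMatrix R *ᵥ x) = ∑ i, ∑ j ∈ G.neighborFinset i, (x i - x j) ^ 2 / 2 := by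
  rw [← toLinearMap₂'_apply', lapMatrix_toLinearMap₂', sum_div]
  simp only [neighborFinset_eq_filter, sum_filter, sum_div, ite_div, zero_div]

end SimpleGraph

theorem decentralized_lyapunov_bound_general {N : ℕ}
    (G : SimpleGraph (Fin N)) [DecidableRel G.Adj]
    (xhat e : Fin N → ℝ) :
    -((xhat - e) ⬝ᵥ ((G.lapMatrix ℝ) *ᵥ xhat)) ≤
      ∑ i, (e i ^ 2 * (G.degree i : ℝ) -
        ∑ j ∈ G.neighborFinset i, (1 / 4) * (xhat i - xhat j) ^ 2) := by
  calc -((xhat - e) ⬝ᵥ ((G.lapMatrix ℝ) *ᵥ xhat))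
      = e ⬝ᵥ (G.lapMatrix ℝ *ᵥ xhat) - xhat ⬝ᵥ (G.lapMatrix ℝ *ᵥ xhat) := by
        rw [sub_dotProduct, neg_sub]
    _ = ∑ i, ∑ j ∈ G.neighborFinset i,
          (e i * (xhat i - xhat j) - (xhat i - xhat j) ^ 2 / 2) := by
        rw [G.dotProduct_lapMatrix_mulVec, G.dotProduct_lapMatrix_mulVec_self,
          ← sum_sub_distrib]
        simp only [sum_sub_distrib]
    _ ≤ ∑ i, ∑ j ∈ G.neighborFinset i, (e i ^ 2 - (1 / 4) * (xhat i - xhat j) ^ 2) := by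
        refine sum_le_sum fun i _ => sum_le_sum fun j _ => ?_
        -- Young's inequality `e d ≤ e² + d²/4`
        nlinarith [sq_nonneg (e i - (xhat i - xhat j) / 2)]
    _ = _ := by
        simp only [sum_sub_distrib, sum_const, G.card_neighborFinset_eq_degree, nsmul_eq_mul,
          mul_comm]

/-- Decentralized Lyapunov bound: for a connected undirected graph `G` with
    Laplacian `L` and neighbor sets `𝒩ᵢ`, with `x = x̂ - e`, the quantity
    `V̇ = -xᵀ L x̂` satisfies
    `V̇ ≤ Σᵢ ( eᵢ² |𝒩ᵢ| - Σ_{j∈𝒩ᵢ} ¼ (x̂ᵢ - x̂ⱼ)² )`. -/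
theorem decentralized_lyapunov_bound {N : ℕ}
    (G : SimpleGraph (Fin N)) [DecidableRel G.Adj] (hconn : G.Connected)
    (xhat e : Fin N → ℝ) :
    -((xhat - e) ⬝ᵥ ((G.lapMatrix ℝ) *ᵥ xhat)) ≤
      ∑ i, (e i ^ 2 * (G.degree i : ℝ) -
        ∑ j ∈ G.neighborFinset i, (1 / 4) * (xhat i - xhat j) ^ 2) :=
  decentralized_lyapunov_bound_general G xhat e
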